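/- Let Q be a quiver obtained by gluing a set S of vertices of a quiver Q₀ into a single vertex (S spanning a strongly connected subquiver), with the induced graph homomorphism φ : Q₀ → Q. Then: (1) the image under φ of any directed cycle of Q₀ is a directed cycle of Q; (2) the image of a primitive cycle of Q₀ that meets S in at most one maximal segment is a primitive cycle of Q; and (3) every primitive cycle of Q has among its preimages at least one primitive cycle of Q₀, provided the subquiver spanned by S is strongly connected. -/

import Mathlib

/-!
Cycles are handled as closed walks, which makes rotating, concatenating and gluing transparent;
(1) is then immediate since `φ` maps walks to walks.

For (2), rotate the cycle so that its visits to `S` form an initial block `B`. The arrows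
filtered out are exactly those of `B` but its last one, and what remains is a walk between two
vertices of `S`, closed after gluing, whose only vertex in `S` is its start.

For (3), rotate a primitive cycle of the glued quiver so that it passes through the glued vertex
at most at its start. Lifted to `Q` it is a path whose endpoints are either equal or both in `S`;
in the latter case a path without repeated vertices inside `S` closes it into a primitive cycle.
-/

/-- A quiver (finite directed multigraph): a finite set of vertices `V`,
a finite set of arrows `A`, and source/target maps `s`, `t`. -/
structure Quiv where
  V : Type
  A : Type
  [fintV : Fintype V]
  [fintA : Fintype A]
  [decV : DecidableEq V]
  [decA : DecidableEq A]
  s : A → V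
  t : A → V

attribute [instance] Quiv.fintV Quiv.fintA Quiv.decV Quiv.decA

namespace Quiv

variable (Q : Quiv)

/-- Cyclic access to the entries of a nonempty list. -/
def cyc (l : List Q.A) (hl : l ≠ []) (i : ℕ) : Q.A :=
  l.get ⟨i % l.length, Nat.mod_lt _ (List.length_pos_iff.mpr hl)⟩

/-- `l` is a (nonempty) directed cycle: consecutive arrows compose, cyclically. -/
def IsCycleList (l : List Q.A) : Prop :=
  ∃ hl : l ≠ [], ∀ i : ℕ, Q.t (Q.cyc l hl i) = Q.s (Q.cyc l hl (i + 1))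

/-- A primitive (simple) cycle: a directed cycle visiting no vertex more than once. -/
def IsPrimCycle (l : List Q.A) : Prop :=
  Q.IsCycleList l ∧ (l.map Q.s).Nodup

/-- The set of primitive cycles of `Q`, each recorded by its (finite) set of arrows.
A primitive cycle is determined, up to rotation, by its set of arrows. -/
def primCycles : Set (Finset Q.A) :=
  { S | ∃ l : List Q.A, Q.IsPrimCycle l ∧ l.toFinset = S }

/-- The number of primitive cycles of `Q`. -/
noncomputable def numPrimCycles : ℕ := Q.primCycles.ncard

/-- One-step reachability. -/
def Step (u v : Q.V) : Prop := ∃ a : Q.A, Q.s a = u ∧ Q.t a = v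

/-- `Q` is strongly connected: every vertex is reachable from every other
by a directed path. -/
def StronglyConnected : Prop := ∀ u v : Q.V, Relation.ReflTransGen Q.Step u v

/-- `Q` has no loops. -/
def NoLoops : Prop := ∀ a : Q.A, Q.s a ≠ Q.t a

/-- In-degree of a vertex (arrows counted with multiplicity). -/
def inDeg (v : Q.V) : ℕ := (Finset.univ.filter fun a => Q.t a = v).card

/-- Out-degree of a vertex (arrows counted with multiplicity). -/
def outDeg (v : Q.V) : ℕ := (Finset.univ.filter fun a => Q.s a = v).card

/-- `F(Q) = |C| + |V| - |A| - 1`, the codimension of the associated toric variety. -/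
noncomputable def F : ℤ :=
  (Q.numPrimCycles : ℤ) + (Fintype.card Q.V : ℤ) - (Fintype.card Q.A : ℤ) - 1


/-- The quiver obtained from `Q` by gluing the set `S` of vertices into a single
vertex `Sum.inr ()`; all arrows are kept (arrows inside `S` become loops). -/
def glue (Q : Quiv) (S : Finset Q.V) : Quiv where
  V := {v : Q.V // v ∉ S} ⊕ Unit
  A := Q.A
  fintV := inferInstance
  fintA := inferInstance
  decV := inferInstance
  decA := inferInstance
  s := fun a => if h : Q.s a ∈ S then Sum.inr () else Sum.inl ⟨Q.s a, h⟩
  t := fun a => if h : Q.t a ∈ S then Sum.inr () else Sum.inl ⟨Q.t a, h⟩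

/-- A cycle `l` of `Q` meets `S` in at most one maximal segment: for some rotation of
`l`, the visits to `S` occur consecutively. -/
def MeetsConsecutively (Q : Quiv) (S : Finset Q.V) (l : List Q.A) : Prop :=
  ∃ r : ℕ, ∀ i j k : Fin (l.rotate r).length, i ≤ j → j ≤ k →
    Q.s ((l.rotate r).get i) ∈ S → Q.s ((l.rotate r).get k) ∈ S →
    Q.s ((l.rotate r).get j) ∈ S
end Quiv


theorem List.IsRotated.filter {α : Type*} {l l' : List α} (h : l ~r l') (p : α → Bool) :
    l.filter p ~r l'.filter p := by
  obtain ⟨n, rfl⟩ := h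
  rw [List.rotate_eq_drop_append_take_mod]
  conv_lhs => rw [← List.take_append_drop (n % l.length) l]
  simpa only [List.filter_append] using List.isRotated_append

theorem List.exists_eq_append_append_of_convex {α : Type*} {p : α → Prop} (l : List α)
    (h : ∀ i j k (hij : i ≤ j) (hjk : j ≤ k) (hk : k < l.length),
      p (l[i]'(by omega)) → p l[k] → p (l[j]'(by omega))) :
    ∃ A B C, l = A ++ B ++ C ∧ (∀ x ∈ A, ¬ p x) ∧ (∀ x ∈ B, p x) ∧
      ∀ x ∈ C, ¬ p x := by
  induction l with
  | nil => exact ⟨[], [], [], by simp⟩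
  | cons a l ih =>
    obtain ⟨A, B, C, rfl, hA, hB, hC⟩ := ih fun i j k hij hjk hk =>
      h (i + 1) (j + 1) (k + 1) (by omega) (by omega) (by simpa using hk)
    by_cases ha : p a
    · rcases A with _ | ⟨x, A⟩
      · exact ⟨[], a :: B, C, by simp, by simp, List.forall_mem_cons.mpr ⟨ha, hB⟩, hC⟩
      rcases B with _ | ⟨y, B⟩
      · exact ⟨[], [a], x :: A ++ C, by simp, by simp, by simp [ha], by grind⟩
      -- `x` lies strictly between `a` and `y`, which both satisfy `p`
      exfalso
      refine hA x (by simp) (h 0 1 (A.length + 2) (by omega) (by omega) (by simp) ha ?_)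
      simpa [List.getElem_append_right] using hB y (by simp)
    · exact ⟨a :: A, B, C, by simp, List.forall_mem_cons.mpr ⟨ha, hA⟩, hB, hC⟩

namespace Quiv

variable {Q : Quiv}

def IsWalk (Q : Quiv) : List Q.A → Q.V → Q.V → Prop
  | [], u, w => u = w
  | a :: p, u, w => Q.s a = u ∧ IsWalk Q p (Q.t a) w

@[simp] lemma isWalk_nil {u w : Q.V} : Q.IsWalk [] u w ↔ u = w := Iff.rfl

@[simp] lemma isWalk_cons {a : Q.A} {p : List Q.A} {u w : Q.V} :
    Q.IsWalk (a :: p) u w ↔ Q.s a = u ∧ Q.IsWalk p (Q.t a) w := Iff.rfl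

lemma isWalk_append {p q : List Q.A} {u w : Q.V} :
    Q.IsWalk (p ++ q) u w ↔ ∃ v, Q.IsWalk p u v ∧ Q.IsWalk q v w := by
  induction p generalizing u with
  | nil => simp
  | cons a p ih => simp [ih, and_assoc]

/-- A walk visits `u, t a₀, t a₁, …`, which is the list of sources followed by `w`. -/
lemma isWalk_iff_cons_map_t {p : List Q.A} {u w : Q.V} :
    Q.IsWalk p u w ↔ u :: p.map Q.t = p.map Q.s ++ [w] := by
  induction p generalizing u with
  | nil => simp [eq_comm]
  | cons a p ih => simp [ih, eq_comm]

lemma isCycleList_iff_map_t {l : List Q.A} :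
    Q.IsCycleList l ↔ l ≠ [] ∧ l.map Q.t = (l.map Q.s).rotate 1 := by
  refine ⟨fun ⟨hl, h⟩ => ⟨hl, ?_⟩, fun ⟨hl, h⟩ => ⟨hl, fun i => ?_⟩⟩
  · refine List.ext_getElem (by simp) fun i hi _ => ?_
    simp only [List.length_map] at hi
    simpa [cyc, List.getElem_rotate, Nat.mod_eq_of_lt hi] using h i
  · have hi : i % l.length < l.length := Nat.mod_lt _ (List.length_pos_iff.mpr hl)
    have := congrArg (·[i % l.length]?) h
    simp [hi] at this
    simpa [cyc, Nat.add_mod] using this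

lemma isCycleList_iff_isWalk {l : List Q.A} :
    Q.IsCycleList l ↔ l ≠ [] ∧ ∃ u, Q.IsWalk l u u := by
  rw [isCycleList_iff_map_t]
  cases l with
  | nil => simp
  | cons a p =>
    simp [isWalk_iff_cons_map_t, List.rotate_cons_succ]

lemma IsWalk.start_mem {p : List Q.A} {u w : Q.V} (h : Q.IsWalk p u w) :
    u ∈ p.map Q.s ++ [w] :=
  isWalk_iff_cons_map_t.mp h ▸ List.mem_cons_self

lemma IsWalk.t_mem {p : List Q.A} {u w : Q.V} (h : Q.IsWalk p u w) {a : Q.A} (ha : a ∈ p) :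
    Q.t a ∈ p.map Q.s ++ [w] :=
  isWalk_iff_cons_map_t.mp h ▸ List.mem_cons_of_mem u (List.mem_map_of_mem ha)

lemma IsCycleList.isRotated {l l' : List Q.A} (h : Q.IsCycleList l) (hr : l ~r l') :
    Q.IsCycleList l' := by
  obtain ⟨hl, u, hu⟩ := isCycleList_iff_isWalk.mp h
  obtain ⟨n, rfl⟩ := hr
  rw [← List.take_append_drop (n % l.length) l, isWalk_append] at hu
  obtain ⟨v, hp, hq⟩ := hu
  refine isCycleList_iff_isWalk.mpr ⟨by simpa using hl, v, ?_⟩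
  rw [List.rotate_eq_drop_append_take_mod]
  exact isWalk_append.mpr ⟨u, hq, hp⟩

lemma IsPrimCycle.isRotated {l l' : List Q.A} (h : Q.IsPrimCycle l) (hr : l ~r l') :
    Q.IsPrimCycle l' :=
  ⟨h.1.isRotated hr, (hr.map Q.s).nodup_iff.mp h.2⟩

lemma isPrimCycle_of_isWalk {l : List Q.A} {u : Q.V} (hl : l ≠ []) (hw : Q.IsWalk l u u)
    (hs : (l.map Q.s).Nodup) : Q.IsPrimCycle l :=
  ⟨isCycleList_iff_isWalk.mpr ⟨hl, u, hw⟩, hs⟩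

section Glue

variable {S : Finset Q.V}

/-- The vertex map `φ : Q → Q.glue S`. -/
def glueVert (Q : Quiv) (S : Finset Q.V) (v : Q.V) : (Q.glue S).V :=
  if h : v ∈ S then Sum.inr () else Sum.inl ⟨v, h⟩

lemma glueVert_eq_glueVert_iff {v w : Q.V} :
    Q.glueVert S v = Q.glueVert S w ↔ v = w ∨ (v ∈ S ∧ w ∈ S) := by
  unfold glueVert
  by_cases hv : v ∈ S <;> by_cases hw : w ∈ S <;> simp [hv, hw] <;> grind

lemma IsWalk.glue {p : List Q.A} {u w : Q.V} (h : Q.IsWalk p u w) :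
    (Q.glue S).IsWalk p (Q.glueVert S u) (Q.glueVert S w) := by
  induction p generalizing u with
  | nil => exact congrArg _ h
  | cons a p ih => exact ⟨congrArg (Q.glueVert S) h.1, ih h.2⟩

lemma nodup_map_glueVert {L : List Q.V} (hL : L.Nodup)
    (hS : ∀ x ∈ L, ∀ y ∈ L, x ∈ S → y ∈ S → x = y) : (L.map (Q.glueVert S)).Nodup :=
  hL.map_on fun x hx y hy hxy =>
    (glueVert_eq_glueVert_iff.mp hxy).elim id fun h => hS x hx y hy h.1 h.2

lemma IsCycleList.glue {l : List Q.A} (h : Q.IsCycleList l) : (Q.glue S).IsCycleList l := by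
  obtain ⟨hl, u, hu⟩ := isCycleList_iff_isWalk.mp h
  exact isCycleList_iff_isWalk.mpr ⟨hl, _, hu.glue⟩

lemma map_glue_s (l : List Q.A) : l.map (Q.glue S).s = (l.map Q.s).map (Q.glueVert S) := by
  rw [List.map_map]; rfl

lemma nodup_map_glue_s_cons {a : Q.A} {p : List Q.A} (h : ((a :: p).map Q.s).Nodup)
    (hp : ∀ x ∈ p, Q.s x ∉ S) : ((a :: p).map (Q.glue S).s).Nodup := by
  refine map_glue_s (a :: p) ▸ nodup_map_glueVert h ?_
  simp only [List.map_cons, List.mem_cons, List.mem_map]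
  rintro _ (rfl | ⟨x, hx, rfl⟩) _ (rfl | ⟨y, hy, rfl⟩) hxS hyS
  exacts [rfl, absurd hyS (hp y hy), absurd hxS (hp x hx), absurd hxS (hp x hx)]

lemma IsPrimCycle.glue_of_forall_not_mem {l : List Q.A} (h : Q.IsPrimCycle l)
    (hl : ∀ a ∈ l, Q.s a ∉ S) : (Q.glue S).IsPrimCycle l := by
  refine ⟨h.1.glue, map_glue_s l ▸ nodup_map_glueVert h.2 ?_⟩
  simp only [List.mem_map]
  rintro _ ⟨a, ha, rfl⟩
  exact fun _ _ haS => absurd haS (hl a ha)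

lemma exists_isRotated_append_of_meetsConsecutively {l : List Q.A}
    (h : MeetsConsecutively Q S l) :
    ∃ B D, l ~r B ++ D ∧ (∀ b ∈ B, Q.s b ∈ S) ∧ ∀ d ∈ D, Q.s d ∉ S := by
  obtain ⟨r, hr⟩ := h
  obtain ⟨A, B, C, hABC, hA, hB, hC⟩ :=
    List.exists_eq_append_append_of_convex (p := fun a => Q.s a ∈ S) (l.rotate r)
      fun i j k hij hjk hk => hr ⟨i, by omega⟩ ⟨j, by omega⟩ ⟨k, hk⟩ hij hjk
  refine ⟨B, C ++ A, ?_, hB, fun d hd => (List.mem_append.mp hd).elim (hC d) (hA d)⟩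
  have h1 : l ~r A ++ (B ++ C) := by
    rw [← List.append_assoc, ← hABC]; exact (List.IsRotated.forall l r).symm
  simpa only [List.append_assoc] using h1.trans List.isRotated_append

lemma isPrimCycle_glue_filter_of_append {B D : List Q.A} (h : Q.IsPrimCycle (B ++ D))
    (hB : ∀ b ∈ B, Q.s b ∈ S) (hD : ∀ d ∈ D, Q.s d ∉ S) (hD0 : D ≠ []) :
    (Q.glue S).IsPrimCycle ((B ++ D).filter fun a => ¬(Q.s a ∈ S ∧ Q.t a ∈ S)) := by
  rcases List.eq_nil_or_concat B with rfl | ⟨B, b, rfl⟩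
  · have hfilter : D.filter (fun a => ¬(Q.s a ∈ S ∧ Q.t a ∈ S)) = D :=
      List.filter_eq_self.mpr fun d hd => by simp [hD d hd]
    -- the filtered list has type `List (Q.glue S).A`, where `rw` cannot see `hfilter`
    exact (congrArg (Q.glue S).IsPrimCycle hfilter).mpr
      ((List.nil_append D ▸ h).glue_of_forall_not_mem hD)
  replace h : Q.IsPrimCycle (B ++ b :: D) := by simpa using h
  obtain ⟨-, u, hu⟩ := isCycleList_iff_isWalk.mp h.1
  obtain ⟨v, hBw, hbD⟩ := isWalk_append.mp hu
  obtain rfl : Q.s b = v := hbD.1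
  have hBS : ∀ x ∈ B.map Q.s ++ [Q.s b], x ∈ S := by
    intro x hx
    simp only [List.mem_append, List.mem_map, List.mem_singleton] at hx
    rcases hx with ⟨y, hy, rfl⟩ | rfl
    exacts [hB y (by simp [hy]), hB b (by simp)]
  have hfilter : ((B.concat b ++ D).filter fun a => ¬(Q.s a ∈ S ∧ Q.t a ∈ S)) = b :: D := by
    obtain ⟨d, D, rfl⟩ := List.exists_cons_of_ne_nil hD0
    have hbd : Q.t b ∉ S := hbD.2.1 ▸ hD d (by simp)
    rw [List.concat_eq_append, List.append_assoc, List.singleton_append, List.filter_append,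
      List.filter_eq_nil_iff.mpr fun x hx => ?_, List.filter_eq_self.mpr fun x hx => ?_,
      List.nil_append]
    · rcases List.mem_cons.mp hx with rfl | hx
      · simp [hbd]
      · simp [hD x hx]
    · simpa using
        ⟨hBS _ (List.mem_append_left _ (List.mem_map_of_mem hx)), hBS _ (hBw.t_mem hx)⟩
  refine (congrArg (Q.glue S).IsPrimCycle hfilter).mpr
    (isPrimCycle_of_isWalk (List.cons_ne_nil _ _) (u := Q.glueVert S (Q.s b)) ?_ ?_)
  · have hu : Q.glueVert S u = Q.glueVert S (Q.s b) :=
      glueVert_eq_glueVert_iff.mpr (Or.inr ⟨hBS u hBw.start_mem, hBS _ (by simp)⟩)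
    simpa only [hu] using hbD.glue (S := S)
  · have hs := h.2
    rw [List.map_append] at hs
    exact nodup_map_glue_s_cons hs.of_append_right hD

theorem IsPrimCycle.glue_filter {l : List Q.A} (hl : Q.IsPrimCycle l)
    (hmeet : MeetsConsecutively Q S l) (hout : ∃ a ∈ l, Q.s a ∉ S) :
    (Q.glue S).IsPrimCycle (l.filter fun a => ¬(Q.s a ∈ S ∧ Q.t a ∈ S)) := by
  obtain ⟨B, D, hr, hB, hD⟩ := exists_isRotated_append_of_meetsConsecutively hmeet
  have hD0 : D ≠ [] := by
    rintro rfl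
    obtain ⟨a, ha, has⟩ := hout
    exact has (hB a (by simpa using hr.mem_iff.mp ha))
  exact (isPrimCycle_glue_filter_of_append (hl.isRotated hr) hB hD hD0).isRotated
    (List.IsRotated.filter hr _).symm

lemma IsWalk.of_glue {p : List Q.A} {v : Q.V} {z : (Q.glue S).V}
    (h : (Q.glue S).IsWalk p (Q.glueVert S v) z) (hp : ∀ b ∈ p, Q.s b ∉ S) :
    ∃ w, Q.glueVert S w = z ∧ Q.IsWalk p v w := by
  induction p generalizing v with
  | nil => exact ⟨v, h, rfl⟩
  | cons b p ih =>
    obtain ⟨w, hw, hpw⟩ := ih h.2 fun c hc => hp c (by simp [hc])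
    have hb : Q.s b = v := ((glueVert_eq_glueVert_iff.mp h.1).resolve_right
      fun hS => hp b (by simp) hS.1)
    exact ⟨w, hw, hb, hpw⟩

lemma exists_nodup_isWalk_of_reflTransGen {P : Q.V → Q.V → Prop} {u w : Q.V}
    (h : Relation.ReflTransGen (fun x y => ∃ a, Q.s a = x ∧ Q.t a = y ∧ P x y) u w) :
    ∃ q : List Q.A, Q.IsWalk q u w ∧ (w :: q.map Q.s).Nodup ∧
      ∀ a ∈ q, P (Q.s a) (Q.t a) := by
  induction h using Relation.ReflTransGen.head_induction_on with
  | refl => exact ⟨[], rfl, by simp, by simp⟩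
  | head hstep _ ih =>
    obtain ⟨a, rfl, rfl, hPa⟩ := hstep
    obtain ⟨q, hq, hnd, hP⟩ := ih
    by_cases hw : Q.s a = w
    · exact ⟨[], hw, by simp, by simp⟩
    by_cases hmem : Q.s a ∈ q.map Q.s
    · obtain ⟨b, hb, hba⟩ := List.mem_map.mp hmem
      obtain ⟨q₁, q₂, rfl⟩ := List.append_of_mem hb
      obtain ⟨v, -, hv⟩ := isWalk_append.mp hq
      refine ⟨b :: q₂, ⟨hba, hv.2⟩, hnd.sublist ?_, fun x hx => hP x (by simp [hx])⟩
      simp only [List.map_append]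
      exact (List.sublist_append_right _ _).cons_cons w
    · refine ⟨a :: q, ⟨rfl, hq⟩, ?_, List.forall_mem_cons.mpr ⟨hPa, hP⟩⟩
      simp only [List.map_cons, List.nodup_cons, List.mem_cons] at hnd ⊢
      exact ⟨by rintro (h | h); exacts [hw h.symm, hnd.1 h], hmem, hnd.2⟩

lemma exists_isPrimCycle_of_glue_cons {a : Q.A} {p : List Q.A}
    (hS : ∀ u ∈ S, ∀ w ∈ S, Relation.ReflTransGen
      (fun x y => ∃ a, Q.s a = x ∧ Q.t a = y ∧ x ∈ S ∧ y ∈ S) u w)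
    (hm : (Q.glue S).IsPrimCycle (a :: p)) (hp : ∀ b ∈ p, Q.s b ∉ S) :
    ∃ l, Q.IsPrimCycle l ∧ (a :: p).Sublist l ∧
      ∀ x ∈ l, x ∉ a :: p → Q.s x ∈ S ∧ Q.t x ∈ S := by
  obtain ⟨hcyc, hnd⟩ := hm
  obtain ⟨-, _, rfl, hpw⟩ := isCycleList_iff_isWalk.mp hcyc
  obtain ⟨w, hw, hpw⟩ := hpw.of_glue hp
  have hsrc : ((a :: p).map Q.s).Nodup := (map_glue_s (a :: p) ▸ hnd).of_map _
  by_cases ha : Q.s a ∈ S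
  · have hwS : w ∈ S := (glueVert_eq_glueVert_iff.mp hw).elim (· ▸ ha) And.left
    obtain ⟨q, hq, hqnd, hqS⟩ := exists_nodup_isWalk_of_reflTransGen (hS w hwS _ ha)
    refine ⟨a :: p ++ q,
      isPrimCycle_of_isWalk (by simp) (isWalk_append.mpr ⟨w, ⟨rfl, hpw⟩, hq⟩) ?_,
      List.sublist_append_left _ _,
      fun x hx hxm => hqS x ((List.mem_append.mp hx).resolve_left hxm)⟩
    rw [List.nodup_cons] at hqnd
    rw [List.map_append, List.nodup_append]
    refine ⟨hsrc, hqnd.2, ?_⟩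
    simp only [List.map_cons, List.mem_cons, List.mem_map]
    rintro _ (rfl | ⟨b, hb, rfl⟩) _ ⟨c, hc, rfl⟩ hbc
    · exact hqnd.1 (List.mem_map.mpr ⟨c, hc, hbc.symm⟩)
    · exact hp b hb (hbc ▸ (hqS c hc).1)
  · obtain rfl : w = Q.s a := (glueVert_eq_glueVert_iff.mp hw).resolve_right fun h => ha h.2
    exact ⟨a :: p, isPrimCycle_of_isWalk (by simp) ⟨rfl, hpw⟩ hsrc, List.Sublist.refl _,
      fun x hx hxm => absurd hx hxm⟩

lemma exists_isRotated_cons_of_glue {m : List Q.A} (hm : (Q.glue S).IsPrimCycle m) :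
    ∃ a p, m ~r a :: p ∧ ∀ b ∈ p, Q.s b ∉ S := by
  by_cases hin : ∃ a ∈ m, Q.s a ∈ S
  · obtain ⟨a, ha, haS⟩ := hin
    obtain ⟨m₁, m₂, rfl⟩ := List.append_of_mem ha
    have hr : m₁ ++ a :: m₂ ~r a :: (m₂ ++ m₁) := by
      simpa using List.isRotated_append (l := m₁) (l' := a :: m₂)
    refine ⟨a, m₂ ++ m₁, hr, fun b hb hbS => ?_⟩
    exact (List.nodup_cons.mp (hm.isRotated hr).2).1
      (List.mem_map.mpr ⟨b, hb, glueVert_eq_glueVert_iff.mpr (Or.inr ⟨hbS, haS⟩)⟩)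
  · obtain ⟨a, p, rfl⟩ := List.exists_cons_of_ne_nil hm.1.1
    exact ⟨a, p, List.IsRotated.refl _, fun b hb hbS => hin ⟨b, by simp [hb], hbS⟩⟩

theorem exists_isPrimCycle_of_glue
    (hS : ∀ u ∈ S, ∀ w ∈ S, Relation.ReflTransGen
      (fun x y => ∃ a, Q.s a = x ∧ Q.t a = y ∧ x ∈ S ∧ y ∈ S) u w)
    {m : List Q.A} (hm : (Q.glue S).IsPrimCycle m) :
    ∃ l, Q.IsPrimCycle l ∧ (m : Multiset Q.A) ≤ l ∧
      ∀ a ∈ l, a ∉ m → Q.s a ∈ S ∧ Q.t a ∈ S := by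
  obtain ⟨a, p, hr, hp⟩ := exists_isRotated_cons_of_glue hm
  obtain ⟨l, hl, hsub, hext⟩ := exists_isPrimCycle_of_glue_cons hS (hm.isRotated hr) hp
  exact ⟨l, hl, Multiset.coe_le.mpr (hr.perm.subperm_right.mpr hsub.subperm),
    fun x hx hxm => hext x hx (hxm ∘ hr.mem_iff.mpr)⟩

end Glue

/-- for the quotient quiver `Q.glue S` obtained by gluing a vertex set
`S` into one vertex (arrows are unchanged):
(1) the image of any directed cycle of `Q` is a directed cycle of `Q.glue S`;
(2) the image of a primitive cycle meeting `S` in at most one maximal segment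
    (and not entirely contained in `S`), i.e. the cycle with the arrows inside `S`
    collapsed, is a primitive cycle of `Q.glue S`;
(3) if the subquiver spanned by `S` is strongly connected, then every primitive cycle
    of `Q.glue S` has a primitive cycle of `Q` among its preimages. -/
theorem stmt_10 (Q : Quiv) (S : Finset Q.V) :
    (∀ l : List Q.A, Q.IsCycleList l → (Q.glue S).IsCycleList l) ∧
    (∀ l : List Q.A, Q.IsPrimCycle l → MeetsConsecutively Q S l →
      (∃ a ∈ l, Q.s a ∉ S) →
      (Q.glue S).IsPrimCycle
        (l.filter fun a => ¬(Q.s a ∈ S ∧ Q.t a ∈ S))) ∧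
    ((∀ u ∈ S, ∀ w ∈ S, Relation.ReflTransGen
        (fun x y : Q.V => ∃ a : Q.A, Q.s a = x ∧ Q.t a = y ∧ x ∈ S ∧ y ∈ S) u w) →
      ∀ m : List Q.A, (Q.glue S).IsPrimCycle m →
        ∃ l : List Q.A, Q.IsPrimCycle l ∧ (↑m : Multiset Q.A) ≤ ↑l ∧
          ∀ a ∈ l, a ∉ m → Q.s a ∈ S ∧ Q.t a ∈ S) :=
  ⟨fun _ h => h.glue, fun _ hl hmeet hout => hl.glue_filter hmeet hout,
    fun hS _ hm => exists_isPrimCycle_of_glue hS hm⟩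

end Quiv
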